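/- arXiv:1111.5075 — 2 statements merged into one kernel-verified Lean document; each statement's English description precedes it below -/
import Mathlib

section
/- Let n ≥ 2, 0 < α < 1, p = n/(n+α), and w ∈ A_1. Then there exists a constant C > 0 such that for every cube Q = Q(x₀, r), the function H(x) = r^{n+1}/(|x−x₀|^{n+1}·w(Q)^{1/p}) satisfies λ^p·w({x ∉ 2√n·Q : H(x) > λ}) ≤ C for all λ > 0. -/
open MeasureTheory Metric Set ENNReal
open scoped Classical

noncomputable section

abbrev Rn (n : ℕ) : Type := EuclideanSpace ℝ (Fin n)

/-- Axis-parallel cube centered at `c` with side length `r`. -/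
def cube {n : ℕ} (c : Rn n) (r : ℝ) : Set (Rn n) := {x | ∀ i, |x i - c i| ≤ r / 2}

/-- The measure `w(E) = ∫_E w` with density `w` w.r.t. Lebesgue measure. -/
def wm {n : ℕ} (w : Rn n → ℝ) : Measure (Rn n) :=
  volume.withDensity (fun x => ENNReal.ofReal (w x))

/-- Muckenhoupt `A_q` condition for `q > 1`. -/
def IsAq {n : ℕ} (w : Rn n → ℝ) (q : ℝ) : Prop :=
  (∀ x, 0 ≤ w x) ∧ LocallyIntegrable w volume ∧
  ∃ C > 0, ∀ (c : Rn n) (r : ℝ), 0 < r →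
    (((volume (cube c r)).toReal⁻¹ * ∫ x in cube c r, w x) *
      (((volume (cube c r)).toReal⁻¹ * ∫ x in cube c r, w x ^ (-1 / (q - 1))) ^ (q - 1))) ≤ C

/-- Muckenhoupt `A_1` condition. -/
def IsA1 {n : ℕ} (w : Rn n → ℝ) : Prop :=
  (∀ x, 0 ≤ w x) ∧ LocallyIntegrable w volume ∧
  ∃ C > 0, ∀ (c : Rn n) (r : ℝ), 0 < r →
    ∀ᵐ y ∂(volume.restrict (cube c r)),
      (volume (cube c r)).toReal⁻¹ * ∫ x in cube c r, w x ≤ C * w y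

/-- Muckenhoupt `A_q` condition for `q ≥ 1`. -/
def IsMuckenhoupt {n : ℕ} (w : Rn n → ℝ) (q : ℝ) : Prop :=
  if q = 1 then IsA1 w else IsAq w q

/-- The parametric Marcinkiewicz integral `μ^ρ_Ω`. -/
def marc {n : ℕ} (ρ : ℝ) (Ω f : Rn n → ℝ) (x : Rn n) : ℝ :=
  (∫ t in Ioi (0:ℝ),
      (∫ y in {y : Rn n | dist x y ≤ t}, Ω (x - y) * ‖x - y‖ ^ (ρ - (n:ℝ)) * f y) ^ 2 *
        t ^ (-(2 * ρ + 1))) ^ ((1:ℝ)/2)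

/-- `Ω` is homogeneous of degree zero. -/
def HomZero {n : ℕ} (Ω : Rn n → ℝ) : Prop :=
  ∀ t : ℝ, 0 < t → ∀ x : Rn n, x ≠ 0 → Ω (t • x) = Ω x

/-- `Ω` has mean value zero on the unit sphere `S^{n-1}`. -/
def MeanZero {n : ℕ} (Ω : Rn n → ℝ) : Prop :=
  ∫ x : Metric.sphere (0 : Rn n) 1, Ω (x : Rn n) ∂((volume : Measure (Rn n)).toSphere) = 0

/-- `Ω ∈ Lip_α(S^{n-1})` with Lipschitz constant `L`. -/
def LipSphere {n : ℕ} (Ω : Rn n → ℝ) (α L : ℝ) : Prop :=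
  ∀ x y : Rn n, ‖x‖ = 1 → ‖y‖ = 1 → |Ω x - Ω y| ≤ L * ‖x - y‖ ^ α

/-- `a` is a `w`-`(p,q,0)`-atom supported in the cube `Q(x₀, r)`. -/
def IsAtomOn {n : ℕ} (w : Rn n → ℝ) (p q : ℝ) (a : Rn n → ℝ) (x₀ : Rn n) (r : ℝ) : Prop :=
  Measurable a ∧ Integrable a volume ∧
  (∀ x, x ∉ cube x₀ r → a x = 0) ∧
  (∫ x in cube x₀ r, |a x| ^ q * w x) ^ (1/q) ≤ (∫ x in cube x₀ r, w x) ^ (1/q - 1/p) ∧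
  (∫ x, a x) = 0

/-- `a` is a `w`-`(p,q,0)`-atom. -/
def IsWAtom {n : ℕ} (w : Rn n → ℝ) (p q : ℝ) (a : Rn n → ℝ) : Prop :=
  ∃ (x₀ : Rn n) (r : ℝ), 0 < r ∧ IsAtomOn w p q a x₀ r

/-- The weighted `L^p` (quasi-)norm `‖f‖_{L^p_w} = (∫ |f|^p w)^{1/p}`. -/
def wLp {n : ℕ} (w : Rn n → ℝ) (p : ℝ) (f : Rn n → ℝ) : ℝ≥0∞ :=
  (∫⁻ x, ENNReal.ofReal (|f x| ^ p * w x)) ^ (1/p)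

/-! A point of the level set lying outside `2√n Q` is at distance more than `r` from `x₀`,
which forces `u = λ w(Q)^{1/p} < 1`; and the whole level set lies in the cube `t Q` with
`t = 2 u^{-1/(n+1)}`. An `A_1` weight is doubling, `w(t Q) ≤ C tⁿ w(Q)`, so
`λ^p w(E) ≤ C 2ⁿ u^{p - n/(n+1)} ≤ C 2ⁿ`, the exponent being nonnegative because `α < 1`. -/

lemma pos_of_lt_div {lam a c : ℝ} (hlam : 0 < lam) (hc : 0 ≤ c) (h : lam < a / c) : 0 < c := by
  refine hc.lt_of_ne' fun hc0 => ?_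
  rw [hc0, _root_.div_zero] at h
  exact hlam.not_gt h

lemma norm_lt_of_lt_div_rpow {d r s lam k : ℝ} (hd : 0 ≤ d) (hr : 0 ≤ r) (hs : 0 < s)
    (hlam : 0 < lam) (hk : 0 < k) (h : lam < r ^ k / (d ^ k * s)) :
    d < r * (lam * s) ^ (-1 / k) := by
  rw [lt_div_iff₀ (pos_of_lt_div hlam (by positivity) h)] at h
  rw [← Real.rpow_lt_rpow_iff hd (by positivity) hk, Real.mul_rpow hr (by positivity),
    ← Real.rpow_mul (by positivity), div_mul_cancel₀ _ hk.ne', Real.rpow_neg_one,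
    ← div_eq_mul_inv, lt_div_iff₀ (by positivity)]
  linarith

lemma mul_lt_one_of_lt_div_rpow {d r s lam k : ℝ} (hr : 0 ≤ r) (hrd : r < d) (hs : 0 < s)
    (hk : 0 < k) (h : lam < r ^ k / (d ^ k * s)) : lam * s < 1 := by
  have hdk : 0 < d ^ k := Real.rpow_pos_of_pos (hr.trans_lt hrd) k
  rw [lt_div_iff₀ (by positivity)] at h
  have hrdk : r ^ k < d ^ k := Real.rpow_lt_rpow hr hrd hk
  nlinarith

lemma rpow_mul_eq_mul_rpow_rpow {a b p q : ℝ} (ha : 0 ≤ a) (hb : 0 ≤ b) (hqp : q * p = 1) :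
    a ^ p * b = (a * b ^ q) ^ p := by
  rw [Real.mul_rpow ha (Real.rpow_nonneg hb q), ← Real.rpow_mul hb, hqp, Real.rpow_one]

lemma rpow_mul_two_mul_rpow_pow_le {u p k : ℝ} (n : ℕ) (hu0 : 0 < u) (hu1 : u ≤ 1)
    (hp : n / k ≤ p) : u ^ p * (2 * u ^ (-1 / k)) ^ n ≤ 2 ^ n := by
  rw [mul_pow, ← Real.rpow_mul_natCast hu0.le, mul_left_comm, ← Real.rpow_add hu0]
  refine mul_le_of_le_one_right (by positivity) (Real.rpow_le_one hu0.le hu1 ?_)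
  linarith [show -1 / k * n = -(n / k) by ring]

section

variable {n : ℕ}

lemma cube_eq_preimage (c : Rn n) (r : ℝ) :
    cube c r = WithLp.ofLp ⁻¹' univ.pi fun i => Icc (c i - r / 2) (c i + r / 2) := by
  ext x
  simp only [cube, mem_preimage, mem_univ_pi, mem_Icc, abs_sub_le_iff, mem_ofPred_eq]
  exact forall_congr' fun i => by constructor <;> intro h <;> constructor <;> linarith [h.1, h.2]

lemma isCompact_cube (c : Rn n) (r : ℝ) : IsCompact (cube c r) := by
  rw [cube_eq_preimage]
  exact (PiLp.homeomorph 2 _).isCompact_preimage.2 (isCompact_univ_pi fun _ => isCompact_Icc)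

lemma measurableSet_cube (c : Rn n) (r : ℝ) : MeasurableSet (cube c r) :=
  (isCompact_cube c r).isClosed.measurableSet

lemma volume_real_cube (c : Rn n) {r : ℝ} (hr : 0 ≤ r) :
    volume.real (cube c r) = r ^ n := by
  rw [measureReal_def, cube_eq_preimage, (PiLp.volume_preserving_ofLp (Fin n)).measure_preimage
    (MeasurableSet.univ_pi fun _ => measurableSet_Icc).nullMeasurableSet, volume_pi_pi]
  simp [Real.volume_Icc, hr]

lemma cube_subset_cube (c : Rn n) {r s : ℝ} (h : r ≤ s) : cube c r ⊆ cube c s :=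
  fun x hx i => (hx i).trans (by linarith)

lemma closedBall_subset_cube (c : Rn n) (ρ : ℝ) : closedBall c ρ ⊆ cube c (2 * ρ) := by
  intro x hx i
  have := (PiLp.norm_apply_le (x - c) i).trans (mem_closedBall_iff_norm.1 hx)
  simpa [Real.norm_eq_abs] using this

lemma lt_norm_sub_of_notMem_cube {c x : Rn n} {r : ℝ} (hn : 1 ≤ n) (hr : 0 ≤ r)
    (hx : x ∉ cube c (2 * Real.sqrt n * r)) : r < ‖x - c‖ := by
  by_contra! h
  have hx' : x ∈ closedBall c (Real.sqrt n * r) := mem_closedBall_iff_norm.2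
    (h.trans (le_mul_of_one_le_left hr (Real.one_le_sqrt.2 (by exact_mod_cast hn))))
  exact hx (by simpa only [mul_assoc] using closedBall_subset_cube c _ hx')

lemma mem_cube_of_lt_div_rpow {c x : Rn n} {r s lam k : ℝ} (hr : 0 ≤ r) (hs : 0 < s)
    (hlam : 0 < lam) (hk : 0 < k) (h : lam < r ^ k / (‖x - c‖ ^ k * s)) :
    x ∈ cube c (2 * (lam * s) ^ (-1 / k) * r) := by
  have hx := norm_lt_of_lt_div_rpow (norm_nonneg _) hr hs hlam hk h
  rw [mul_assoc, mul_comm _ r]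
  exact closedBall_subset_cube c _ (mem_closedBall_iff_norm.2 hx.le)

lemma wm_cube {w : Rn n → ℝ} (hw : 0 ≤ w) (hloc : LocallyIntegrable w volume) (c : Rn n)
    (r : ℝ) :
    wm w (cube c r) = ENNReal.ofReal (∫ x in cube c r, w x) := by
  rw [wm, withDensity_apply _ (measurableSet_cube c r), ofReal_integral_eq_lintegral_ofReal
    (hloc.integrableOn_isCompact (isCompact_cube c r)) (Filter.Eventually.of_forall hw)]

theorem IsA1.exists_setIntegral_cube_le {w : Rn n → ℝ} (hw : IsA1 w) :
    ∃ C > 0, ∀ (c : Rn n) {r t : ℝ}, 0 < r → 1 ≤ t →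
      ∫ x in cube c (t * r), w x ≤ C * t ^ n * ∫ x in cube c r, w x := by
  obtain ⟨-, hloc, C, hC, hA⟩ := hw
  refine ⟨C, hC, fun c r t hr ht => ?_⟩
  have htr : 0 < t * r := by positivity
  have hA' := hA c (t * r) htr
  rw [← measureReal_def, volume_real_cube c htr.le] at hA'
  generalize ∫ x in cube c (t * r), w x = I at hA' ⊢
  -- the average over the large cube is at most `C` times the essential infimum on the small one
  have hae : ∀ᵐ y ∂(volume.restrict (cube c r)), ((t * r) ^ n)⁻¹ * I ≤ C * w y :=
    ae_restrict_of_ae_restrict_of_subset (cube_subset_cube c (le_mul_of_one_le_left hr.le ht)) hA'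
  have : IsFiniteMeasure (volume.restrict (cube c r)) :=
    isFiniteMeasure_restrict.2 (isCompact_cube c r).measure_lt_top.ne
  have hint := integral_mono_ae (integrable_const _)
    ((hloc.integrableOn_isCompact (isCompact_cube c r)).const_mul C) hae
  rw [integral_const, integral_const_mul, measureReal_restrict_apply_univ,
    volume_real_cube c hr.le, smul_eq_mul] at hint
  calc I = t ^ n * (r ^ n * (((t * r) ^ n)⁻¹ * I)) := by
        rw [mul_pow]; field_simp
    _ ≤ t ^ n * (C * ∫ x in cube c r, w x) := by gcongr
    _ = C * t ^ n * ∫ x in cube c r, w x := by ring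

end

/-- weak type estimate for `H(x) = r^{n+1}/(|x−x₀|^{n+1} w(Q)^{1/p})`
outside `2√n Q`, with `p = n/(n+α)` and `w ∈ A_1`. -/
theorem statement13 (n : ℕ) (hn : 2 ≤ n) (α : ℝ) (hα0 : 0 < α) (hα1 : α < 1)
    (w : Rn n → ℝ) (hw : IsA1 w) :
    ∃ C > 0, ∀ (x₀ : Rn n) (r : ℝ), 0 < r → ∀ lam : ℝ, 0 < lam →
      ENNReal.ofReal (lam ^ ((n : ℝ) / (n + α))) *
        wm w {x | x ∉ cube x₀ (2 * Real.sqrt n * r) ∧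
          lam < r ^ ((n : ℝ) + 1) /
            (‖x - x₀‖ ^ ((n : ℝ) + 1) * (∫ y in cube x₀ r, w y) ^ (((n : ℝ) + α) / n))} ≤
        ENNReal.ofReal C := by
  obtain ⟨C, hC, hdoubling⟩ := hw.exists_setIntegral_cube_le
  refine ⟨C * 2 ^ n, by positivity, fun x₀ r hr lam hlam => ?_⟩
  set p : ℝ := n / (n + α)
  set q : ℝ := (n + α) / n
  set W := ∫ y in cube x₀ r, w y
  set E := {x | x ∉ cube x₀ (2 * Real.sqrt n * r) ∧
    lam < r ^ ((n : ℝ) + 1) / (‖x - x₀‖ ^ ((n : ℝ) + 1) * W ^ q)}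
  rcases E.eq_empty_or_nonempty with hE | ⟨x, hx_out, hx_lt⟩
  · simp [hE]
  have hW : 0 ≤ W := setIntegral_nonneg (measurableSet_cube x₀ r) fun y _ => hw.1 y
  have hWq : 0 < W ^ q :=
    pos_of_mul_pos_right (pos_of_lt_div hlam (by positivity) hx_lt) (by positivity)
  set u := lam * W ^ q
  have hu1 : u ≤ 1 := (mul_lt_one_of_lt_div_rpow hr.le
    (lt_norm_sub_of_notMem_cube (by omega) hr.le hx_out) hWq (by positivity) hx_lt).le
  set t := 2 * u ^ (-1 / ((n : ℝ) + 1))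
  have ht : 1 ≤ t := by
    linarith [Real.one_le_rpow_of_pos_of_le_one_of_nonpos (by positivity) hu1
      (div_nonpos_of_nonpos_of_nonneg (by norm_num) (by positivity) : -1 / ((n : ℝ) + 1) ≤ 0)]
  have hE_sub : E ⊆ cube x₀ (t * r) := fun y hy =>
    mem_cube_of_lt_div_rpow hr.le hWq hlam (by positivity) hy.2
  calc ENNReal.ofReal (lam ^ p) * wm w E
      ≤ ENNReal.ofReal (lam ^ p * ∫ y in cube x₀ (t * r), w y) := by
        rw [ENNReal.ofReal_mul (by positivity), ← wm_cube hw.1 hw.2.1]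
        gcongr
    _ ≤ ENNReal.ofReal (lam ^ p * (C * t ^ n * W)) := by
        gcongr
        exact hdoubling x₀ hr ht
    _ = ENNReal.ofReal (C * (u ^ p * t ^ n)) := by
        rw [← rpow_mul_eq_mul_rpow_rpow hlam.le hW (by simp only [p, q]; field_simp)]
        ring_nf
    _ ≤ ENNReal.ofReal (C * 2 ^ n) := by
        gcongr
        exact rpow_mul_two_mul_rpow_pow_le n (by positivity) hu1 (by simp only [p]; gcongr)

end
end

section
/- Let n ≥ 1. There exists a constant C > 0 depending only on n such that for every Schwartz function φ on ℝⁿ satisfying sup_{x∈ℝⁿ} sup_{|β|≤1} (1+|x|)^{n+1}|D^β φ(x)| ≤ 1, every locally integrable function f on ℝⁿ, and every x ∈ ℝⁿ, sup_{t>0} sup_{|y−x|<t} |(φ_t * f)(y)| ≤ C·Mf(x), where φ_t(z) = t^{−n}φ(z/t) and M is the Hardy–Littlewood maximal operator Mf(x) = sup_{Q∋x} |Q|^{−1}∫_Q |f(y)| dy, the supremum taken over all cubes Q containing x. -/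
open MeasureTheory Metric Set ENNReal
open scoped Classical

noncomputable section

/-!
Split `ℝⁿ` into the ball `B(y, t)` and the dyadic annuli `B(y, 2ᵏ⁺¹t) \ B(y, 2ᵏt)`. On the
`k`-th piece the decay `|φ(u)| ≤ (1 + |u|)^{-(n+1)}` bounds `|φ_t(y - ·)|` by `2^{-k(n+1)}` up to a
factor `2^{n+1} t^{-n}`, while the piece lies in the cube of side `2^{k+2} t` centred at `x`
(as `|y - x| < t`), over which `|f|` integrates to at most `(2^{k+2} t)^n Mf(x)`. The `k`-th
contribution is therefore at most `2^{3n+1-k} Mf(x)`, and the geometric series sums to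
`2^{3n+2} Mf(x)`.
-/

lemma pow_mul_abs_le_of_decay {E : Type*} [SeminormedAddCommGroup E] {φ : E → ℝ} {N : ℕ}
    (hφ : ∀ u, (1 + ‖u‖) ^ (N : ℝ) * |φ u| ≤ 1) {u : E} {s : ℝ} (hs : 0 ≤ s)
    (h : s ≤ 1 + ‖u‖) : s ^ N * |φ u| ≤ 1 := by
  refine le_trans ?_ (hφ u)
  rw [Real.rpow_natCast]
  gcongr

lemma setLIntegral_mul_le_of_abs_le {α : Type*} [MeasurableSpace α] {μ : Measure α} {s : Set α}
    (hs : MeasurableSet s) {g f : α → ℝ} {b : ℝ} (hg : ∀ z ∈ s, |g z| ≤ b) :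
    ∫⁻ z in s, ENNReal.ofReal |g z * f z| ∂μ ≤
      ENNReal.ofReal b * ∫⁻ z in s, ENNReal.ofReal |f z| ∂μ := by
  rw [← lintegral_const_mul' _ _ ofReal_ne_top]
  refine setLIntegral_mono' hs fun z hz => ?_
  rw [abs_mul, ENNReal.ofReal_mul (abs_nonneg _)]
  gcongr
  exact hg z hz

section

variable {n : ℕ}

def maximalFunction (f : Rn n → ℝ) (x : Rn n) : ℝ≥0∞ :=
  ⨆ (c : Rn n) (r : ℝ) (_ : 0 < r) (_ : x ∈ cube c r),
    (∫⁻ z in cube c r, ENNReal.ofReal |f z|) / volume (cube c r)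

lemma ball_subset_cube {c y : Rn n} {s r : ℝ} (h : s + dist y c ≤ r / 2) :
    ball y s ⊆ cube c r := fun z hz i =>
  calc |z i - c i| = dist (z i) (c i) := (Real.dist_eq _ _).symm
    _ ≤ dist z c := PiLp.dist_apply_le z c i
    _ ≤ dist z y + dist y c := dist_triangle z y c
    _ ≤ r / 2 := by linarith [mem_ball.1 hz]

lemma self_mem_cube (c : Rn n) {r : ℝ} (hr : 0 ≤ r) : c ∈ cube c r := fun i => by
  rw [sub_self, abs_zero]
  linarith

lemma volume_cube (c : Rn n) (r : ℝ) : volume (cube c r) = ENNReal.ofReal r ^ n := by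
  have hcube : cube c r = (MeasurableEquiv.toLp 2 (Fin n → ℝ)).symm ⁻¹'
      univ.pi fun i => Icc (c i - r / 2) (c i + r / 2) := by
    ext x
    simp only [cube, mem_ofPred_eq, mem_preimage, mem_univ_pi, mem_Icc, abs_le,
      MeasurableEquiv.toLp_symm_apply]
    refine forall_congr' fun i => ?_
    constructor <;> rintro ⟨h₁, h₂⟩ <;> constructor <;> linarith
  rw [hcube, (EuclideanSpace.volume_preserving_symm_measurableEquiv_toLp (Fin n)).measure_preimage
    (MeasurableSet.univ_pi fun _ => measurableSet_Icc).nullMeasurableSet, volume_pi_pi]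
  simp [Real.volume_Icc, show ∀ a : ℝ, a + r / 2 - (a - r / 2) = r from fun a => by ring]

lemma setLIntegral_cube_le_maximalFunction (f : Rn n → ℝ) {c x : Rn n} {r : ℝ} (hr : 0 < r)
    (hx : x ∈ cube c r) :
    ∫⁻ z in cube c r, ENNReal.ofReal |f z| ≤ maximalFunction f x * ENNReal.ofReal r ^ n := by
  have hvol : volume (cube c r) ≠ 0 := by simp [volume_cube, hr]
  rw [← volume_cube, ← ENNReal.div_le_iff hvol (by simp [volume_cube])]
  exact le_iSup_of_le c <| le_iSup_of_le r <| le_iSup_of_le hr <| le_iSup_of_le hx le_rfl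

/-- `B(y, t)` for `k = 0` and `B(y, 2ᵏt) \ B(y, 2ᵏ⁻¹t)` for `k ≥ 1`. -/
def dyadicAnnulus (y : Rn n) (t : ℝ) : ℕ → Set (Rn n) :=
  disjointed fun k => ball y (2 ^ k * t)

lemma iUnion_dyadicAnnulus (y : Rn n) {t : ℝ} (ht : 0 < t) : ⋃ k, dyadicAnnulus y t k = univ := by
  rw [dyadicAnnulus, iUnion_disjointed]
  refine eq_univ_of_forall fun z => mem_iUnion.2 ?_
  obtain ⟨k, hk⟩ := pow_unbounded_of_one_lt (dist z y / t) one_lt_two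
  exact ⟨k, mem_ball.2 <| (div_lt_iff₀ ht).1 hk⟩

lemma two_pow_mul_le_of_mem_dyadicAnnulus {y z : Rn n} {t : ℝ} (ht : 0 < t) {k : ℕ}
    (hz : z ∈ dyadicAnnulus y t k) : 2 ^ k * t ≤ 2 * (t + dist z y) := by
  cases k with
  | zero => simp only [pow_zero, one_mul]; linarith [dist_nonneg (x := z) (y := y)]
  | succ k =>
    have hmono : Monotone fun k : ℕ => ball y (2 ^ k * t) := fun i j hij =>
      ball_subset_ball <| by gcongr; norm_num
    rw [dyadicAnnulus, ← Order.succ_eq_add_one, hmono.disjointed_succ (not_isMax k)] at hz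
    have := not_lt.1 <| mem_ball.not.1 hz.2
    rw [pow_succ]
    linarith

lemma abs_dilate_le_of_mem_dyadicAnnulus {φ : Rn n → ℝ}
    (hφ : ∀ u, (1 + ‖u‖) ^ ((n : ℝ) + 1) * |φ u| ≤ 1) {y z : Rn n} {t : ℝ} (ht : 0 < t)
    {k : ℕ} (hz : z ∈ dyadicAnnulus y t k) :
    |(t ^ n)⁻¹ * φ (t⁻¹ • (y - z))| ≤ 2 ^ (n + 1) / (2 ^ k) ^ (n + 1) / t ^ n := by
  set u := t⁻¹ • (y - z)
  have hu : 2 ^ k / 2 ≤ 1 + ‖u‖ := by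
    have hnorm : ‖u‖ = dist z y / t := by
      rw [norm_smul, norm_inv, Real.norm_of_nonneg ht.le, dist_comm, dist_eq_norm, inv_mul_eq_div]
    calc (2 : ℝ) ^ k / 2 = 2 ^ k * t / (2 * t) := by field_simp
      _ ≤ 2 * (t + dist z y) / (2 * t) :=
          div_le_div_of_nonneg_right (two_pow_mul_le_of_mem_dyadicAnnulus ht hz) (by positivity)
      _ = 1 + ‖u‖ := by rw [hnorm]; field_simp
  have hdecay := pow_mul_abs_le_of_decay (N := n + 1) (by exact_mod_cast hφ) (by positivity) hu
  rw [div_pow, div_mul_eq_mul_div, div_le_one (by positivity)] at hdecay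
  rw [abs_mul, abs_inv, abs_of_pos (by positivity), inv_mul_eq_div]
  gcongr
  rwa [le_div_iff₀ (by positivity), mul_comm]

lemma setLIntegral_dyadicAnnulus_le {φ : Rn n → ℝ}
    (hφ : ∀ u, (1 + ‖u‖) ^ ((n : ℝ) + 1) * |φ u| ≤ 1) (f : Rn n → ℝ) {x y : Rn n} {t : ℝ}
    (ht : 0 < t) (hy : dist y x < t) (k : ℕ) :
    ∫⁻ z in dyadicAnnulus y t k, ENNReal.ofReal |(t ^ n)⁻¹ * φ (t⁻¹ • (y - z)) * f z| ≤
      maximalFunction f x * ENNReal.ofReal (2 ^ (3 * n + 2) / 2 / 2 ^ k) := by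
  set b : ℝ := 2 ^ (n + 1) / (2 ^ k) ^ (n + 1) / t ^ n
  set r : ℝ := 2 ^ (k + 2) * t
  have hsub : dyadicAnnulus y t k ⊆ cube x r := by
    refine (disjointed_subset _ k).trans (ball_subset_cube ?_)
    have : t ≤ 2 ^ k * t := le_mul_of_one_le_left ht.le (one_le_pow₀ one_le_two)
    simp only [r, pow_succ]
    linarith
  calc ∫⁻ z in dyadicAnnulus y t k, ENNReal.ofReal |(t ^ n)⁻¹ * φ (t⁻¹ • (y - z)) * f z|
      ≤ ENNReal.ofReal b * ∫⁻ z in dyadicAnnulus y t k, ENNReal.ofReal |f z| :=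
        setLIntegral_mul_le_of_abs_le (MeasurableSet.disjointed (fun _ => measurableSet_ball) k)
          fun z hz => abs_dilate_le_of_mem_dyadicAnnulus hφ ht hz
    _ ≤ ENNReal.ofReal b * (maximalFunction f x * ENNReal.ofReal r ^ n) := by
        gcongr
        exact (lintegral_mono_set hsub).trans <|
          setLIntegral_cube_le_maximalFunction f (by positivity) (self_mem_cube x (by positivity))
    _ = maximalFunction f x * ENNReal.ofReal (2 ^ (3 * n + 2) / 2 / 2 ^ k) := by
        rw [mul_left_comm, ← ENNReal.ofReal_pow (by positivity),
          ← ENNReal.ofReal_mul (by positivity)]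
        congr 2
        simp only [b, r, pow_add, mul_pow, ← pow_mul]
        field_simp
        ring

theorem ofReal_abs_integral_dilate_mul_le {φ : Rn n → ℝ}
    (hφ : ∀ u, (1 + ‖u‖) ^ ((n : ℝ) + 1) * |φ u| ≤ 1) (f : Rn n → ℝ) {x y : Rn n} {t : ℝ}
    (ht : 0 < t) (hy : dist y x < t) :
    ENNReal.ofReal |∫ z, (t ^ n)⁻¹ * φ (t⁻¹ • (y - z)) * f z| ≤
      ENNReal.ofReal (2 ^ (3 * n + 2)) * maximalFunction f x :=
  calc ENNReal.ofReal |∫ z, (t ^ n)⁻¹ * φ (t⁻¹ • (y - z)) * f z|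
      ≤ ∫⁻ z, ENNReal.ofReal |(t ^ n)⁻¹ * φ (t⁻¹ • (y - z)) * f z| := by
        simpa only [Real.enorm_eq_ofReal_abs] using enorm_integral_le_lintegral_enorm (μ := volume)
          fun z => (t ^ n)⁻¹ * φ (t⁻¹ • (y - z)) * f z
    _ ≤ ∑' k, ∫⁻ z in dyadicAnnulus y t k,
          ENNReal.ofReal |(t ^ n)⁻¹ * φ (t⁻¹ • (y - z)) * f z| := by
        rw [← setLIntegral_univ, ← iUnion_dyadicAnnulus y ht]
        exact lintegral_iUnion_le _ _
    _ ≤ ∑' k : ℕ, maximalFunction f x * ENNReal.ofReal (2 ^ (3 * n + 2) / 2 / 2 ^ k) :=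
        ENNReal.tsum_le_tsum (setLIntegral_dyadicAnnulus_le hφ f ht hy)
    _ = ENNReal.ofReal (2 ^ (3 * n + 2)) * maximalFunction f x := by
        rw [ENNReal.tsum_mul_left, ← ENNReal.ofReal_tsum_of_nonneg (fun _ => by positivity)
          (summable_geometric_two' _), tsum_geometric_two', mul_comm]

end

theorem statement17_general (n : ℕ) :
    ∃ C > 0, ∀ φ : SchwartzMap (Rn n) ℝ,
      (∀ x : Rn n, (1 + ‖x‖) ^ ((n : ℝ) + 1) * |φ x| ≤ 1) →
      (∀ (x : Rn n) (i : Fin n),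
        (1 + ‖x‖) ^ ((n : ℝ) + 1) * |fderiv ℝ (⇑φ) x (EuclideanSpace.single i 1)| ≤ 1) →
      ∀ f : Rn n → ℝ, LocallyIntegrable f volume →
      ∀ x : Rn n,
        (⨆ (t : ℝ) (_ : 0 < t) (y : Rn n) (_ : dist y x < t),
            ENNReal.ofReal |∫ z : Rn n, (t ^ (n : ℕ))⁻¹ * φ (t⁻¹ • (y - z)) * f z|) ≤
          ENNReal.ofReal C *
            ⨆ (c : Rn n) (r : ℝ) (_ : 0 < r) (_ : x ∈ cube c r),
              (∫⁻ z in cube c r, ENNReal.ofReal |f z|) / volume (cube c r) :=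
  ⟨2 ^ (3 * n + 2), by positivity, fun φ hφ _ f _ x =>
    iSup₂_le fun _ ht => iSup₂_le fun _ hy => ofReal_abs_integral_dilate_mul_le hφ f ht hy⟩

/-- the grand maximal function is pointwise dominated by the
Hardy–Littlewood maximal function. -/
theorem statement17 (n : ℕ) (hn : 1 ≤ n) :
    ∃ C > 0, ∀ φ : SchwartzMap (Rn n) ℝ,
      (∀ x : Rn n, (1 + ‖x‖) ^ ((n : ℝ) + 1) * |φ x| ≤ 1) →
      (∀ (x : Rn n) (i : Fin n),
        (1 + ‖x‖) ^ ((n : ℝ) + 1) * |fderiv ℝ (⇑φ) x (EuclideanSpace.single i 1)| ≤ 1) →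
      ∀ f : Rn n → ℝ, LocallyIntegrable f volume →
      ∀ x : Rn n,
        (⨆ (t : ℝ) (_ : 0 < t) (y : Rn n) (_ : dist y x < t),
            ENNReal.ofReal |∫ z : Rn n, (t ^ (n : ℕ))⁻¹ * φ (t⁻¹ • (y - z)) * f z|) ≤
          ENNReal.ofReal C *
            ⨆ (c : Rn n) (r : ℝ) (_ : 0 < r) (_ : x ∈ cube c r),
              (∫⁻ z in cube c r, ENNReal.ofReal |f z|) / volume (cube c r) :=
  statement17_general n

end
end
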